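/- Let (𝒳, ρ) be a metric space, η : 𝒳 → 𝒴 a labeling function, and U ⊆ 𝒳 a mutually-labeling set for η. Then for any sequence (X_n)_{n≥1} in 𝒳 and any nearest neighbor process (X̃_n) for it, Σ_{n=2}^∞ 1{X_n ∈ U and η(X_n) ≠ η(X̃_n)} ≤ 1. -/

import Mathlib

open MeasureTheory Filter Set Metric
open scoped ENNReal NNReal

noncomputable section

/-- The margin of a point: distance to the nearest differently-labeled point (`⊤` if none). -/
def margin {α 𝒴 : Type*} [PseudoMetricSpace α] (η : α → 𝒴) (x : α) : ℝ≥0∞ :=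
  ⨅ (x' : α) (_ : η x' ≠ η x), edist x x'

/-- The boundary of a labeling function: the set of points with zero margin. -/
def labelBoundary {α 𝒴 : Type*} [PseudoMetricSpace α] (η : α → 𝒴) : Set α :=
  {x | margin η x = 0}

/-- A set is mutually-labeling for `η` if its diameter is smaller than the margin of
each of its points. -/
def MutuallyLabeling {α 𝒴 : Type*} [PseudoMetricSpace α] (η : α → 𝒴) (U : Set α) : Prop :=
  ∀ x ∈ U, EMetric.diam U < margin η x

/-- `Xt` is a nearest-neighbor process for the sequence `X` (indices start at 1):
for every `n ≥ 2`, `Xt n` is one of `X 1, …, X (n-1)` realizing the minimal distance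
to `X n`. -/
def IsNNProcess {α : Type*} [PseudoMetricSpace α] (X Xt : ℕ → α) : Prop :=
  ∀ n, 2 ≤ n → (∃ m, 1 ≤ m ∧ m < n ∧ Xt n = X m) ∧
    ∀ m, 1 ≤ m → m < n → dist (X n) (Xt n) ≤ dist (X n) (X m)

/-- The natural filtration of the process `X`: at time `n` it is `σ(X 1, …, X n)`. -/
def natFilt {Ω α : Type*} [MeasurableSpace α] (X : ℕ → Ω → α) (n : ℕ) : MeasurableSpace Ω :=
  ⨆ m ∈ Set.Icc 1 n, MeasurableSpace.comap (X m) inferInstance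

/-- `X` is uniformly dominated by `ν` at rate `ε` (uniform absolute continuity):
for every `δ > 0` and every measurable `A` with `ν A < δ`, almost surely
`P(X n ∈ A | 𝓕 (n-1)) < ε δ` for every `n ≥ 1`. -/
def UniformlyDominatedAtRate {Ω α : Type*} [MeasurableSpace Ω] [MeasurableSpace α]
    (P : Measure Ω) (X : ℕ → Ω → α) (ν : Measure α) (ε : ℝ → ℝ) : Prop :=
  ∀ δ : ℝ, 0 < δ → ∀ A : Set α, MeasurableSet A → ν A < ENNReal.ofReal δ →
    ∀ᵐ ω ∂P, ∀ n, 1 ≤ n →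
      (P[fun ω' => A.indicator (fun _ => (1 : ℝ)) (X n ω') | natFilt X (n - 1)]) ω < ε δ

/-- `X` is uniformly dominated by `ν`. -/
def UniformlyDominated {Ω α : Type*} [MeasurableSpace Ω] [MeasurableSpace α]
    (P : Measure Ω) (X : ℕ → Ω → α) (ν : Measure α) : Prop :=
  ∀ ε : ℝ, 0 < ε → ∃ δ : ℝ, 0 < δ ∧ ∀ A : Set α, MeasurableSet A → ν A < ENNReal.ofReal δ →
    ∀ᵐ ω ∂P, ∀ n, 1 ≤ n →
      (P[fun ω' => A.indicator (fun _ => (1 : ℝ)) (X n ω') | natFilt X (n - 1)]) ω < ε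

/-- `X` is ergodically dominated by `ν` (ergodic continuity). -/
def ErgodicallyDominated {Ω α : Type*} [MeasurableSpace Ω] [MeasurableSpace α]
    (P : Measure Ω) (X : ℕ → Ω → α) (ν : Measure α) : Prop :=
  ∀ ε : ℝ, 0 < ε → ∃ δ : ℝ, 0 < δ ∧ ∀ A : Set α, MeasurableSet A → ν A < ENNReal.ofReal δ →
    ∀ᵐ ω ∂P, Filter.limsup (fun N : ℕ =>
      (∑ n ∈ Finset.Icc 1 N, A.indicator (fun _ => (1 : ℝ)) (X n ω)) / N) atTop < ε

/-- `X` is a `σ`-smoothed process with respect to `ν`. -/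
def Smoothed {Ω α : Type*} [MeasurableSpace Ω] [MeasurableSpace α]
    (P : Measure Ω) (X : ℕ → Ω → α) (ν : Measure α) (σ : ℝ) : Prop :=
  ∀ A : Set α, MeasurableSet A →
    ∀ᵐ ω ∂P, ∀ n, 1 ≤ n →
      (P[fun ω' => A.indicator (fun _ => (1 : ℝ)) (X n ω') | natFilt X (n - 1)]) ω ≤
        σ⁻¹ * (ν A).toReal

/-- `α` is a `d`-doubling metric space: every ball can be covered by `2 ^ d` balls of
half the radius. -/
def DoublingWith (α : Type*) [PseudoMetricSpace α] (d : ℕ) : Prop :=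
  ∀ (x : α) (r : ℝ), ∃ t : Finset α, t.card ≤ 2 ^ d ∧ ball x r ⊆ ⋃ y ∈ t, ball y (r / 2)

/-- `(α, ν)` is upper doubling with parameters `(c, d)`. -/
def UpperDoubling (α : Type*) [PseudoMetricSpace α] [MeasurableSpace α]
    (ν : Measure α) (c : ℝ) (d : ℕ) : Prop :=
  DoublingWith α d ∧ ∀ (x : α) (r : ℝ), 0 < r → ν (ball x r) ≤ ENNReal.ofReal (c * r ^ d)

/-- The `r`-packing number of a set `U`. -/
def packingNumber {α : Type*} [PseudoMetricSpace α] (r : ℝ) (U : Set α) : ℕ∞ :=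
  ⨆ (Z : Finset α) (_ : ↑Z ⊆ U ∧ ∀ z ∈ Z, ∀ z' ∈ Z, z ≠ z' → r ≤ dist z z'), (Z.card : ℕ∞)

/-- The `r`-covering number of a set `A`. -/
def coveringNumber {α : Type*} [PseudoMetricSpace α] (r : ℝ) (A : Set α) : ℕ∞ :=
  ⨅ (t : Finset α) (_ : A ⊆ ⋃ y ∈ t, ball y r), (t.card : ℕ∞)

/-- The upper box-counting dimension of a set. -/
def boxDim {α : Type*} [PseudoMetricSpace α] (A : Set α) : ℝ :=
  Filter.limsup (fun r : ℝ => Real.log ((coveringNumber r A).toNat : ℝ) / Real.log (1 / r))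
    (nhdsWithin 0 (Set.Ioi 0))

/-- The mutually-labeling covering number of `V` for `η`. -/
def mlCoveringNumber {α 𝒴 : Type*} [PseudoMetricSpace α] (η : α → 𝒴) (V : Set α) : ℕ∞ :=
  ⨅ (𝒰 : Finset (Set α)) (_ : (∀ U ∈ 𝒰, MutuallyLabeling η U) ∧ V ⊆ ⋃ U ∈ 𝒰, U),
    (𝒰.card : ℕ∞)

/-- The `r`-expansion of a set. -/
def expansion {α : Type*} [PseudoMetricSpace α] (A : Set α) (r : ℝ) : Set α :=
  ⋃ x ∈ A, ball x r

/-- The upper Minkowski content of `A` with respect to `ν`. -/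
def minkowskiContent {α : Type*} [PseudoMetricSpace α] [MeasurableSpace α]
    (ν : Measure α) (A : Set α) : ℝ≥0∞ :=
  Filter.limsup (fun r : ℝ => (ν (expansion A r) - ν A) / ENNReal.ofReal r)
    (nhdsWithin 0 (Set.Ioi 0))

/-- A length space: the distance between two points is the infimum of lengths of
continuous paths joining them. -/
def IsLengthSpace (α : Type*) [PseudoMetricSpace α] : Prop :=
  ∀ x y : α, edist x y =
    ⨅ (γ : ℝ → α) (_ : ContinuousOn γ (Set.Icc 0 1)) (_ : γ 0 = x) (_ : γ 1 = y),
      eVariationOn γ (Set.Icc 0 1)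

/-- The ball associated to a (center, dyadic level) pair: radius `2 ^ (-level)`. -/
def ballOf {α : Type*} [PseudoMetricSpace α] (p : α × ℕ) : Set α :=
  ball p.1 ((2 : ℝ) ^ (-(p.2 : ℤ)))

/-- The insertion rank of a new point `x` relative to an existing cover tree `C`:
the least `ℓ ≥ 1` such that no ball of radius `2 ^ (-ℓ)` in `C` contains `x`. -/
def nextRank {α : Type*} [PseudoMetricSpace α] (C : Set (α × ℕ)) (x : α) : ℕ :=
  sInf {ℓ : ℕ | 1 ≤ ℓ ∧ ∀ q ∈ C, q.2 = ℓ → x ∉ ballOf q}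

/-- Sequentially constructed cover trees for the points `a 1, a 2, …`; a cover tree is
recorded as the set of its (center, dyadic level) pairs. -/
def coverTree {α : Type*} [PseudoMetricSpace α] (a : ℕ → α) : ℕ → Set (α × ℕ)
  | 0 => ∅
  | 1 => {p | p.1 = a 1}
  | (k + 2) => coverTree a (k + 1) ∪
      {p | p.1 = a (k + 2) ∧ nextRank (coverTree a (k + 1)) (a (k + 2)) ≤ p.2}

/-- The insertion ranks of the sequentially constructed cover trees. -/
def insertionRank {α : Type*} [PseudoMetricSpace α] (a : ℕ → α) : ℕ → ℕ
  | 0 => 0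
  | 1 => 0
  | (k + 2) => nextRank (coverTree a (k + 1)) (a (k + 2))

/-! Every point within `diam U` of a point `x ∈ U` has the label of `x`, since `diam U` is
below the margin of `x`. Once some `X m` lies in `U`, each later `X n ∈ U` has a
nearest neighbor at distance at most `dist (X n) (X m) ≤ diam U`, which therefore has the right
label; so a mistake in `U` can only happen at the first visit of `U`. -/

theorem margin_le_edist {α 𝒴 : Type*} [PseudoMetricSpace α] {η : α → 𝒴} {x y : α}
    (h : η y ≠ η x) : margin η x ≤ edist x y :=
  iInf₂_le y h

theorem MutuallyLabeling.label_eq_of_edist_le_diam {α 𝒴 : Type*} [PseudoMetricSpace α]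
    {η : α → 𝒴} {U : Set α} (hU : MutuallyLabeling η U) {x y : α} (hx : x ∈ U)
    (hxy : edist x y ≤ Metric.ediam U) : η y = η x := by
  by_contra hne
  exact (hU x hx).not_ge ((margin_le_edist hne).trans hxy)

theorem IsNNProcess.edist_le {α : Type*} [PseudoMetricSpace α] {X Xt : ℕ → α}
    (hnn : IsNNProcess X Xt) {m n : ℕ} (hn : 2 ≤ n) (hm : 1 ≤ m) (hmn : m < n) :
    edist (X n) (Xt n) ≤ edist (X n) (X m) := by
  simpa only [edist_dist] using ENNReal.ofReal_le_ofReal ((hnn n hn).2 m hm hmn)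

theorem IsNNProcess.le_of_label_ne_of_mem {α 𝒴 : Type*} [PseudoMetricSpace α] {η : α → 𝒴}
    {U : Set α} (hU : MutuallyLabeling η U) {X Xt : ℕ → α} (hnn : IsNNProcess X Xt)
    {m n : ℕ} (hm : 1 ≤ m) (hXm : X m ∈ U) (hn : 2 ≤ n) (hXn : X n ∈ U)
    (hmistake : η (X n) ≠ η (Xt n)) : n ≤ m := by
  by_contra! hmn
  refine hmistake (hU.label_eq_of_edist_le_diam hXn ?_).symm
  exact (hnn.edist_le hn hm hmn).trans (Metric.edist_le_ediam_of_mem hXn hXm)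

/-- Mutual labeling property: on a mutually-labeling set, the nearest
neighbor rule makes at most one mistake. -/
theorem mutually_labeling_at_most_one_mistake
    {α 𝒴 : Type*} [MetricSpace α] (η : α → 𝒴) (U : Set α)
    (hU : MutuallyLabeling η U) (X Xt : ℕ → α) (hnn : IsNNProcess X Xt) :
    Set.encard {n : ℕ | 2 ≤ n ∧ X n ∈ U ∧ η (X n) ≠ η (Xt n)} ≤ 1 := by
  rw [Set.encard_le_one_iff]
  rintro n n' ⟨hn, hXn, hmistake⟩ ⟨hn', hXn', hmistake'⟩
  exact le_antisymm
    (hnn.le_of_label_ne_of_mem hU (by omega) hXn' hn hXn hmistake)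
    (hnn.le_of_label_ne_of_mem hU (by omega) hXn hn' hXn' hmistake')
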